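/- Let n ≥ 3 be an integer divisible by 3, let 1 ≤ k ≤ n−1, let λ ∈ ℝ and α, β ∈ ℂ. Let v = α·v₁ + β·v₂ and v' = α·v₁ + e^{2πi/3}·β·v₂, and let S be the n×n cyclic shift matrix S e_i = e_{i+1 (mod n)}. Then for every X ∈ M_n(ℂ): τ_{n,k}(X) − λ·((v'v'*) ∘ X) = S*·( τ_{n,k}(S X S*) − λ·((v v*) ∘ (S X S*)) )·S. In particular, the map X ↦ τ_{n,k}(X) − λ·(v'v'*)∘X is obtained from the map X ↦ τ_{n,k}(X) − λ·(vv*)∘X by composing with unitary (permutation) conjugations on input and output. -/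
import Mathlib


open Matrix Finset

/-- The map `τ_{n,k} : M_n(ℂ) → M_n(ℂ)`, `τ_{n,k}(X) = D(X) - X` where
`D(X)_{ii} = (n-k)·X_{ii} + Σ_{j=1}^{k} X_{i+j,i+j}` (indices mod `n`). -/
noncomputable def tau (n k : ℕ) (X : Matrix (ZMod n) (ZMod n) ℂ) :
    Matrix (ZMod n) (ZMod n) ℂ :=
  Matrix.diagonal (fun i => ((n : ℂ) - (k : ℂ)) * X i i
      + ∑ j ∈ Finset.Icc 1 k, X (i + (j : ZMod n)) (i + (j : ZMod n))) - X

/-- The cyclic shift matrix `S` with `S e_i = e_{i+1 (mod n)}`, i.e.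
`S_{ij} = 1` iff `i = j + 1 (mod n)`. -/
noncomputable def shiftS (n : ℕ) : Matrix (ZMod n) (ZMod n) ℂ :=
  Matrix.of fun i j => if i = j + 1 then 1 else 0

/-- The unit vector `v₁ ∈ ℂ^n` (for `3 ∣ n`) with entries `(v₁)_l = e^{2πil/3}/√n`. -/
noncomputable def w1 (n : ℕ) : ZMod n → ℂ :=
  fun l => Complex.exp (2 * Real.pi * Complex.I * l.val / 3) / (Real.sqrt n : ℂ)

/-- The unit vector `v₂ ∈ ℂ^n` (for `3 ∣ n`) with entries `(v₂)_l = e^{4πil/3}/√n`. -/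
noncomputable def w2 (n : ℕ) : ZMod n → ℂ :=
  fun l => Complex.exp (4 * Real.pi * Complex.I * l.val / 3) / (Real.sqrt n : ℂ)

private lemma conj_entry {n : ℕ} [NeZero n] (M : Matrix (ZMod n) (ZMod n) ℂ) (i j : ZMod n) :
    ((shiftS n)ᴴ * M * shiftS n) i j = M (i+1) (j+1) := by
  simp [shiftS, Matrix.mul_apply, Matrix.conjTranspose_apply, apply_ite,
    mul_ite, ite_mul, Finset.sum_ite_eq, Finset.sum_ite_eq']

private lemma sh_entry {n : ℕ} [NeZero n] (X : Matrix (ZMod n) (ZMod n) ℂ) (i j : ZMod n) :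
    (shiftS n * X * (shiftS n)ᴴ) (i+1) (j+1) = X i j := by
  simp [shiftS, Matrix.mul_apply, Matrix.conjTranspose_apply, apply_ite, add_left_inj,
    mul_ite, ite_mul, Finset.sum_ite_eq, Finset.sum_ite_eq']

/-- with `v = α·v₁ + β·v₂` and `v' = α·v₁ + e^{2πi/3}·β·v₂`,
`τ_{n,k}(X) − λ·((v'v'*) ∘ X) = S*( τ_{n,k}(S X S*) − λ·((vv*) ∘ (S X S*)) )S`. -/
theorem statement17 (n k : ℕ) [NeZero n] (hn3 : 3 ≤ n) (h3 : 3 ∣ n)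
    (hk1 : 1 ≤ k) (hkn : k ≤ n - 1) (lam : ℝ) (α β : ℂ)
    (v v' : ZMod n → ℂ)
    (hv : v = fun l => α * w1 n l + β * w2 n l)
    (hv' : v' = fun l => α * w1 n l + Complex.exp (2 * Real.pi * Complex.I / 3) * β * w2 n l)
    (X : Matrix (ZMod n) (ZMod n) ℂ) :
    tau n k X - (lam : ℂ) • Matrix.hadamard (Matrix.vecMulVec v' (star v')) X
      = (shiftS n)ᴴ *
          (tau n k (shiftS n * X * (shiftS n)ᴴ)
            - (lam : ℂ) • Matrix.hadamard (Matrix.vecMulVec v (star v))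
                (shiftS n * X * (shiftS n)ᴴ)) *
          shiftS n := by
  haveI : Fact (1 < n) := ⟨by omega⟩
  set ω := Complex.exp (2 * Real.pi * Complex.I / 3) with hω
  have hω3 : ω ^ 3 = 1 := by
    rw [hω, ← Complex.exp_nat_mul,
      show ((3:ℕ):ℂ) * (2*Real.pi*Complex.I/3) = 2*Real.pi*Complex.I by push_cast; ring,
      Complex.exp_two_pi_mul_I]
  have hpow : ∀ m : ℕ, ω ^ m = ω ^ (m % 3) := by
    intro m
    conv_lhs => rw [← Nat.div_add_mod m 3]
    rw [pow_add, pow_mul, hω3, one_pow, one_mul]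
  have hw1 : ∀ l : ZMod n, w1 n l = ω ^ l.val / (Real.sqrt n : ℂ) := by
    intro l
    rw [w1, ← Complex.exp_nat_mul,
      show (l.val : ℂ) * (2*Real.pi*Complex.I/3) = 2 * Real.pi * Complex.I * l.val / 3 by ring]
  have hw2 : ∀ l : ZMod n, w2 n l = ω ^ (2 * l.val) / (Real.sqrt n : ℂ) := by
    intro l
    rw [w2, ← Complex.exp_nat_mul,
      show ((2 * l.val : ℕ) : ℂ) * (2*Real.pi*Complex.I/3)
          = 4 * Real.pi * Complex.I * l.val / 3 by push_cast; ring]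
  have hval : ∀ l : ZMod n, (l+1).val % 3 = (l.val + 1) % 3 := by
    intro l
    rw [ZMod.val_add, ZMod.val_one, Nat.mod_mod_of_dvd _ h3]
  have hw1s : ∀ l : ZMod n, w1 n (l+1) = ω * w1 n l := by
    intro l
    rw [hw1, hw1, hpow, hval, ← hpow, pow_succ]; ring
  have hw2s : ∀ l : ZMod n, w2 n (l+1) = ω ^ 2 * w2 n l := by
    intro l
    rw [hw2, hw2, hpow, Nat.mul_mod, hval, ← Nat.mul_mod, ← hpow,
      show 2 * (l.val + 1) = 2 * l.val + 2 by ring, pow_add]; ring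
  have hωω : ω * (starRingEnd ℂ) ω = 1 := by
    rw [hω, ← Complex.exp_conj, ← Complex.exp_add,
      show (starRingEnd ℂ) (2*Real.pi*Complex.I/3) = -(2*Real.pi*Complex.I/3) by
        simp [map_div₀, _root_.map_mul, map_ofNat, Complex.conj_I, Complex.conj_ofReal]; ring,
      add_neg_cancel, Complex.exp_zero]
  have hvs : ∀ l : ZMod n, v (l+1) = ω * v' l := by
    intro l
    rw [hv, hv']
    simp only
    rw [hw1s, hw2s]; ring
  have hvv : ∀ i j : ZMod n, v (i+1) * star (v (j+1)) = v' i * star (v' j) := by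
    intro i j
    simp only [Complex.star_def, hvs, _root_.map_mul]
    calc ω * v' i * ((starRingEnd ℂ) ω * (starRingEnd ℂ) (v' j))
        = (ω * (starRingEnd ℂ) ω) * (v' i * (starRingEnd ℂ) (v' j)) := by ring
      _ = v' i * (starRingEnd ℂ) (v' j) := by rw [hωω, one_mul]
  have hYgen : ∀ a b : ZMod n, (shiftS n * X * (shiftS n)ᴴ) a b = X (a-1) (b-1) := by
    intro a b
    have h := sh_entry X (a-1) (b-1)
    rwa [sub_add_cancel, sub_add_cancel] at h
  ext i j
  rw [conj_entry]
  simp only [tau, Matrix.sub_apply, Matrix.smul_apply, Matrix.hadamard_apply,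
    Matrix.vecMulVec_apply, Pi.star_apply, Matrix.diagonal_apply, add_left_inj,
    smul_eq_mul, hYgen,
    show ∀ a b : ZMod n, a + 1 + b - 1 = a + b from fun a b => by ring,
    show ∀ a : ZMod n, a + 1 - 1 = a from fun a => by ring]
  rw [hvv]
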